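/- For k = 2, every MMS balanced 2-partition with additive utilities is EF1: if some agent a envied agent b even after removing any single agent from b's part, then swapping a least-valued member of a's part with a member of b's part would strictly increase a's minimum utility over both parts, contradicting that a received its maximin share. -/

import Mathlib

open Finset

variable {V : Type*} [Fintype V] [DecidableEq V]

/-- The `i`-th part of the `k`-partition given by `π`. -/
def cell {k : ℕ} (π : V → Fin k) (i : Fin k) : Finset V :=
  Finset.univ.filter fun v => π v = i

/-- A `k`-partition is balanced if every part has size `⌊n/k⌋` or `⌈n/k⌉`. -/
def IsBalanced {k : ℕ} (π : V → Fin k) : Prop :=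
  ∀ i : Fin k, Fintype.card V / k ≤ (cell π i).card ∧
    (cell π i).card ≤ (Fintype.card V + k - 1) / k

/-- Additive utility of agent `a` for a set `S` of agents. -/
def autil (u : V → V → ℕ) (a : V) (S : Finset V) : ℕ := ∑ b ∈ S, u a b

/-- The maximin share of agent `a` w.r.t. additive utilities `u`:
the largest `m` such that some balanced `k`-partition gives `a` utility
at least `m` in every part. -/
noncomputable def mmsShareA (k : ℕ) (u : V → V → ℕ) (a : V) : ℕ :=
  sSup {m : ℕ | ∃ π : V → Fin k, IsBalanced π ∧ ∀ i : Fin k, m ≤ autil u a (cell π i)}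

/-! If `a` still envies `b`'s part `B` after removing `b` and any single `c`, then some
`c ∈ B \ {b}` is worth more to `a` than some `d` in `a`'s part `A`: otherwise, since balance gives
`|B \ {b}| ≤ |A|`, agent `a` would value `B \ {b}` at most as much as `A`. Swapping `c` and `d`
keeps the partition balanced and gives `a` strictly more than `u_a(A)` in both parts, so the
maximin share of `a` exceeds `u_a(A)`. -/

namespace Finset

variable {ι M : Type*}

theorem sum_comp_swap [DecidableEq ι] [AddCommMonoid M] (f : ι → M) {s : Finset ι} {d c : ι}
    (hd : d ∈ s) (hc : c ∉ s) :
    ∑ x ∈ s, f (Equiv.swap d c x) = ∑ x ∈ s.erase d, f x + f c := by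
  have hfix : ∀ x ∈ s.erase d, f (Equiv.swap d c x) = f x := fun x hx =>
    congrArg f <| Equiv.swap_apply_of_ne_of_ne (ne_of_mem_erase hx)
      (ne_of_mem_of_not_mem (mem_of_mem_erase hx) hc)
  rw [← sum_erase_add s _ hd, Equiv.swap_apply_left, sum_congr rfl hfix]

theorem sum_le_sum_of_card_le_of_forall_le [AddCommMonoid M] [LinearOrder M]
    [IsOrderedAddMonoid M] [CanonicallyOrderedAdd M] {f : ι → M} {s t : Finset ι}
    (hcard : s.card ≤ t.card) (hle : ∀ x ∈ s, ∀ y ∈ t, f x ≤ f y) :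
    ∑ x ∈ s, f x ≤ ∑ y ∈ t, f y := by
  rcases t.eq_empty_or_nonempty with rfl | ht
  · simp_all
  obtain ⟨y, hy, hmin⟩ := t.exists_min_image f ht
  calc ∑ x ∈ s, f x ≤ s.card • f y := sum_le_card_nsmul s f _ fun x hx => hle x hx y hy
    _ ≤ t.card • f y := nsmul_le_nsmul_left zero_le hcard
    _ ≤ ∑ y ∈ t, f y := card_nsmul_le_sum t f _ hmin

end Finset

variable {k : ℕ}

omit [Fintype V] [DecidableEq V] in
theorem autil_mono (u : V → V → ℕ) (a : V) : Monotone (autil u a) :=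
  fun _ _ h => sum_le_sum_of_subset h

section

omit [DecidableEq V]

@[simp]
theorem mem_cell {π : V → Fin k} {i : Fin k} {v : V} : v ∈ cell π i ↔ π v = i := by
  simp [cell]

theorem cell_comp_perm (π : V → Fin k) (σ : Equiv.Perm V) (i : Fin k) :
    cell (π ∘ σ) i = (cell π i).map σ.symm.toEmbedding := by
  ext v
  simp [mem_map_equiv]

theorem IsBalanced.comp_perm {π : V → Fin k} (hπ : IsBalanced π) (σ : Equiv.Perm V) :
    IsBalanced (π ∘ σ) := by
  intro i
  rw [cell_comp_perm, card_map]
  exact hπ i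

theorem IsBalanced.card_cell_le_card_cell_add_one {π : V → Fin 2} (hπ : IsBalanced π)
    (i j : Fin 2) : (cell π i).card ≤ (cell π j).card + 1 := by
  have := (hπ i).2
  have := (hπ j).1
  omega

theorem le_mmsShareA [NeZero k] {u : V → V → ℕ} {a : V} {π : V → Fin k} (hπ : IsBalanced π)
    {m : ℕ} (hm : ∀ i, m ≤ autil u a (cell π i)) : m ≤ mmsShareA k u a := by
  refine le_csSup ⟨autil u a univ, ?_⟩ ⟨π, hπ, hm⟩
  rintro m' ⟨π', -, hm'⟩
  exact (hm' 0).trans (autil_mono u a (subset_univ _))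

end

theorem autil_cell_comp_swap (u : V → V → ℕ) (a : V) {π : V → Fin k} {i : Fin k} {d c : V}
    (hd : π d = i) (hc : π c ≠ i) :
    autil u a (cell (π ∘ Equiv.swap d c) i) = autil u a ((cell π i).erase d) + u a c := by
  rw [cell_comp_perm, Equiv.symm_swap, autil, sum_map]
  exact sum_comp_swap (u a) (mem_cell.2 hd) (mt mem_cell.1 hc)

theorem stmt6_general (u : V → V → ℕ)
    (π : V → Fin 2) (hπ : IsBalanced π)
    (hmms : ∀ a : V, mmsShareA 2 u a ≤ autil u a (cell π (π a))) :
    ∀ a b : V, ∃ c : V,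
      autil u a (((cell π (π b)).erase b).erase c) ≤ autil u a (cell π (π a)) := by
  intro a b
  by_cases hab : π b = π a
  · exact ⟨b, autil_mono u a <| hab ▸ (erase_subset _ _).trans (erase_subset _ _)⟩
  by_contra! henvy
  obtain ⟨c, hc, d, hd, hdc⟩ :
      ∃ c ∈ (cell π (π b)).erase b, ∃ d ∈ cell π (π a), u a d < u a c := by
    by_contra! hle
    have hcard : ((cell π (π b)).erase b).card ≤ (cell π (π a)).card := by
      have := hπ.card_cell_le_card_cell_add_one (π b) (π a)
      rw [card_erase_of_mem (mem_cell.2 rfl)]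
      omega
    exact (henvy b).not_ge <| (autil_mono u a (erase_subset _ _)).trans
      (sum_le_sum_of_card_le_of_forall_le hcard hle)
  have hπc : π c = π b := mem_cell.1 (mem_of_mem_erase hc)
  have hπd : π d = π a := mem_cell.1 hd
  have hswap : autil u a (cell π (π a)) + 1 ≤ mmsShareA 2 u a := by
    refine le_mmsShareA (hπ.comp_perm (Equiv.swap d c)) fun i => ?_
    rcases (show i = π a ∨ i = π b by omega) with rfl | rfl
    · rw [autil_cell_comp_swap u a hπd (hπc ▸ hab)]
      have : autil u a ((cell π (π a)).erase d) + u a d = autil u a (cell π (π a)) :=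
        sum_erase_add _ _ hd
      omega
    · rw [Equiv.swap_comm, autil_cell_comp_swap u a hπc (hπd ▸ Ne.symm hab)]
      have := autil_mono u a (erase_subset_erase c (erase_subset b (cell π (π b))))
      have := henvy c
      omega
  have := hmms a
  omega

/-- For two parts, every MMS balanced 2-partition with additive utilities is EF1:
for every pair of agents `a, b` there is an agent `c` whose removal from `b`'s part
(after removing `b`) eliminates the envy of `a`. -/
theorem stmt6 (G : SimpleGraph V) [DecidableRel G.Adj] (u : V → V → ℕ)
    (hu : ∀ a b : V, 0 < u a b ↔ G.Adj a b)
    (π : V → Fin 2) (hπ : IsBalanced π)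
    (hmms : ∀ a : V, mmsShareA 2 u a ≤ autil u a (cell π (π a))) :
    ∀ a b : V, ∃ c : V,
      autil u a (((cell π (π b)).erase b).erase c) ≤ autil u a (cell π (π a)) :=
  stmt6_general u π hπ hmms
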